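/- arXiv:1106.0120 — 2 statements merged into one kernel-verified Lean document; each statement's English description precedes it below -/
import Mathlib

section
/- There is a constant k_0 > 0 such that for all integers k ≥ k_0 and all sequences m = m(n) with m/n ≤ 2^k·ln 2, the random formula Φ = Φ_k(n,m) has the following property with high probability: for every set U ⊆ V of variables with |U| ≤ n/k, the number of clause indices i ∈ [m] with N(Φ_i) ⊆ U is at most 1.1·|U|/k. -/
open Finset
open scoped Classical

/-- A `k`-SAT formula with `m` clauses over variables `Fin n`: each clause is an ordered
`k`-tuple of literals, a literal being a pair of a variable and a sign
(`true` = positive occurrence, `false` = negated occurrence). -/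
abbrev KFormula (n m k : ℕ) := Fin m → Fin k → Fin n × Bool

/-- The probability, under the uniform distribution on `k`-SAT formulas with `m` clauses
over `n` variables, of the event `P`. -/
noncomputable def probOf (n m k : ℕ) (P : KFormula n m k → Prop) : ℝ :=
  ((Finset.univ.filter fun Φ : KFormula n m k => P Φ).card : ℝ) /
    (Fintype.card (KFormula n m k) : ℝ)

/-- The set `N(Φ_i)` of variables occurring in clause `i`. -/
def clauseVars {n m k : ℕ} (Φ : KFormula n m k) (i : Fin m) : Finset (Fin n) :=
  Finset.image (fun j => (Φ i j).1) Finset.univ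

/-! First moment method. If a set `U` with `|U| ≤ n/k` contains the variables of `t > 1.1|U|/k`
clauses, then `U` can be padded to a set of exactly `w = min(⌊n/k⌋, ⌊10kt/11⌋)` variables that
contains all `kt` variable occurrences of those `t` clauses. For fixed clauses and a fixed `w`-set
this has probability `(w/n)^(kt)`, so the failure probability is at most
`∑ₜ C(m,t) C(n,w) (w/n)^(kt)`. Because `w ≤ 10kt/11`, after `C(n,w) (w/n)^w ≤ 3^w` is paid for,
at least `kt/11` factors `w/n ≤ 1/k` remain; for `k ≥ 6^12` they beat the `(3 · 2^k)^t · 3^(kt)`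
coming from the binomials, and the `t`-th term is at most `2^(-t) k²/n`. -/

theorem Nat.choose_le_three_mul_div_pow (n r : ℕ) : (n.choose r : ℝ) ≤ (3 * n / r) ^ r := by
  rcases Nat.eq_zero_or_pos r with rfl | hr
  · simp
  have hexp : (r : ℝ) ^ r / r.factorial ≤ 3 ^ r := by
    calc (r : ℝ) ^ r / r.factorial ≤ Real.exp r := Real.pow_div_factorial_le_exp _ r.cast_nonneg r
      _ = Real.exp 1 ^ r := by rw [← Real.exp_nat_mul, mul_one]
      _ ≤ 3 ^ r := by gcongr; exact (Real.exp_one_lt_d9.trans (by norm_num)).le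
  calc (n.choose r : ℝ) ≤ n ^ r / r.factorial := Nat.choose_le_pow_div r n
    _ = (n / r) ^ r * (r ^ r / r.factorial) := by rw [div_pow]; field_simp
    _ ≤ (n / r) ^ r * 3 ^ r := by gcongr
    _ = (3 * n / r) ^ r := by rw [← mul_pow]; ring

theorem Nat.choose_mul_div_pow_le_three_pow {n : ℕ} (hn : 0 < n) (r : ℕ) :
    (n.choose r : ℝ) * (r / n) ^ r ≤ 3 ^ r := by
  rcases Nat.eq_zero_or_pos r with rfl | hr
  · simp
  calc (n.choose r : ℝ) * (r / n) ^ r ≤ (3 * n / r) ^ r * (r / n) ^ r := by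
        gcongr; exact Nat.choose_le_three_mul_div_pow n r
    _ = 3 ^ r := by rw [← mul_pow]; congr 1; field_simp

theorem six_pow_le_pow_sub {k t w : ℕ} (hk : 6 ^ 12 ≤ k) (hw : 11 * w ≤ 10 * (k * t)) :
    6 ^ ((k + 2) * t) ≤ k ^ (k * t - w - 2 * t) := by
  have h286 : 286 * t ≤ k * t := Nat.mul_le_mul_right t (by omega)
  calc 6 ^ ((k + 2) * t) ≤ 6 ^ (12 * (k * t - w - 2 * t)) :=
        Nat.pow_le_pow_right (by norm_num) (by rw [add_mul]; omega)
    _ = (6 ^ 12) ^ (k * t - w - 2 * t) := pow_mul 6 12 _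
    _ ≤ k ^ (k * t - w - 2 * t) := Nat.pow_le_pow_left hk _

theorem pow_div_twelve_le {x c : ℝ} {t : ℕ} (hx0 : 0 ≤ x) (hx1 : x ≤ 1) (hxc : x ≤ c * t)
    (ht : 1 ≤ t) : (x / 12) ^ t ≤ (1 / 2) ^ t * c := by
  have ht6 : (t : ℝ) ≤ 6 ^ t := by exact_mod_cast (Nat.lt_pow_self (by norm_num)).le
  have hc : 0 ≤ c := nonneg_of_mul_nonneg_left (hx0.trans hxc) (by positivity)
  calc (x / 12) ^ t = (1 / 12) ^ t * x ^ t := by rw [div_eq_mul_one_div, mul_pow, mul_comm]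
    _ ≤ (1 / 12) ^ t * x := by gcongr; exact pow_le_of_le_one hx0 hx1 (by omega)
    _ ≤ (1 / 12) ^ t * (c * t) := by gcongr
    _ ≤ (1 / 12) ^ t * (c * 6 ^ t) := by gcongr
    _ = (1 / 2) ^ t * c := by rw [mul_left_comm, ← mul_pow, mul_comm]; norm_num

theorem choose_mul_choose_mul_pow_le {k n m t w : ℕ} (hk : 6 ^ 12 ≤ k) (hn : 0 < n) (ht : 1 ≤ t)
    (hwk : w * k ≤ n) (hw : 11 * w ≤ 10 * (k * t)) (hm : (m : ℝ) ≤ 2 ^ k * n) :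
    (m.choose t : ℝ) * n.choose w * ((w : ℝ) / n) ^ (k * t) ≤ (1 / 2) ^ t * (k ^ 2 / n) := by
  have hn' : (0 : ℝ) < n := by exact_mod_cast hn
  have hk' : (0 : ℝ) < k := by exact_mod_cast (by omega : 0 < k)
  have hwkt : (w : ℝ) ≤ k * t := by
    have : (11 : ℝ) * w ≤ 10 * (k * t) := by exact_mod_cast hw
    nlinarith
  set u : ℝ := w / n with hu
  have huk : u ≤ 1 / k := by
    rw [hu, div_le_div_iff₀ hn' hk', one_mul]; exact_mod_cast hwk
  -- `C(n,w) u^w` and `u^(2t)` are paid for out of `u^(kt)`; the remaining `e ≥ kt/11 - 2t`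
  -- factors `u ≤ 1/k` absorb the exponential factors of the binomial bounds.
  set e := k * t - w - 2 * t
  have hexp : k * t = w + 2 * t + e := by
    have : 286 * t ≤ k * t := Nat.mul_le_mul_right t (by omega)
    omega
  have hue : u ^ e ≤ (1 / 6 ^ (k + 2)) ^ t := by
    have hnum : (6 : ℝ) ^ ((k + 2) * t) ≤ (k : ℝ) ^ e := by
      exact_mod_cast six_pow_le_pow_sub hk hw
    calc u ^ e ≤ (1 / k) ^ e := by gcongr
      _ = 1 / (k : ℝ) ^ e := by rw [one_div_pow]
      _ ≤ 1 / 6 ^ ((k + 2) * t) := by gcongr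
      _ = (1 / 6 ^ (k + 2)) ^ t := by rw [one_div_pow, pow_mul]
  have hchoose_m : (m.choose t : ℝ) ≤ (3 * (2 ^ k * n) / t) ^ t := by
    calc (m.choose t : ℝ) ≤ (3 * m / t) ^ t := Nat.choose_le_three_mul_div_pow m t
      _ ≤ (3 * (2 ^ k * n) / t) ^ t := by gcongr
  have hchoose_n : (n.choose w : ℝ) * u ^ w ≤ (3 ^ k) ^ t := by
    calc (n.choose w : ℝ) * u ^ w ≤ 3 ^ w := Nat.choose_mul_div_pow_le_three_pow hn w
      _ ≤ 3 ^ (k * t) := pow_le_pow_right₀ (by norm_num) (by exact_mod_cast hwkt)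
      _ = (3 ^ k) ^ t := pow_mul 3 k t
  have hx1 : (w : ℝ) ^ 2 / (n * t) ≤ 1 := by
    rw [div_le_one (by positivity)]
    have : (w : ℝ) * k ≤ n := by exact_mod_cast hwk
    nlinarith
  have hxk : (w : ℝ) ^ 2 / (n * t) ≤ k ^ 2 / n * t := by
    have hw2 : (w : ℝ) ^ 2 ≤ (k * t) ^ 2 := pow_le_pow_left₀ (by positivity) hwkt 2
    rw [div_mul_eq_mul_div, div_le_div_iff₀ (by positivity) hn']
    nlinarith
  calc (m.choose t : ℝ) * n.choose w * u ^ (k * t)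
      = (m.choose t : ℝ) * (n.choose w * u ^ w) * (u ^ 2) ^ t * u ^ e := by
        rw [hexp, pow_add, pow_add, pow_mul]; ring
    _ ≤ (3 * (2 ^ k * n) / t) ^ t * (3 ^ k) ^ t * (u ^ 2) ^ t * (1 / 6 ^ (k + 2)) ^ t := by
        gcongr
    _ = ((w : ℝ) ^ 2 / (n * t) / 12) ^ t := by
        rw [← mul_pow, ← mul_pow, ← mul_pow]
        congr 1
        rw [hu, pow_add, show (6 : ℝ) ^ k = 2 ^ k * 3 ^ k by rw [← mul_pow]; norm_num]
        field_simp
        ring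
    _ ≤ (1 / 2) ^ t * (k ^ 2 / n) := pow_div_twelve_le (by positivity) hx1 hxk ht

-- The largest `|U|` compatible with `|U| ≤ n/k` and `1.1 |U| / k < t`.
def witnessSize (n k t : ℕ) : ℕ := min (n / k) (10 * (k * t) / 11)

theorem witnessSize_mul_le (n k t : ℕ) : witnessSize n k t * k ≤ n :=
  (Nat.mul_le_mul_right k (min_le_left _ _)).trans (Nat.div_mul_le_self n k)

theorem eleven_mul_witnessSize_le (n k t : ℕ) : 11 * witnessSize n k t ≤ 10 * (k * t) := by
  have := min_le_right (n / k) (10 * (k * t) / 11)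
  unfold witnessSize
  omega

section

variable {n m k : ℕ}

theorem probOf_le_one (P : KFormula n m k → Prop) : probOf n m k P ≤ 1 :=
  div_le_one_of_le₀ (by exact_mod_cast card_filter_le _ _) (Nat.cast_nonneg _)

theorem probOf_mono {P Q : KFormula n m k → Prop} (h : ∀ Φ, P Φ → Q Φ) :
    probOf n m k P ≤ probOf n m k Q := by
  unfold probOf
  gcongr with Φ
  exact h Φ

theorem probOf_add_probOf_not (hn : 0 < n) (P : KFormula n m k → Prop) :
    probOf n m k P + probOf n m k (fun Φ => ¬ P Φ) = 1 := by
  have : (0 : ℝ) < Fintype.card (KFormula n m k) := by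
    have : Nonempty (Fin n) := ⟨⟨0, hn⟩⟩
    exact_mod_cast Fintype.card_pos
  unfold probOf
  rw [← add_div, div_eq_one_iff_eq this.ne', ← Nat.cast_add, card_filter_add_card_filter_not,
    card_univ]

theorem probOf_exists_le_sum {ι : Type*} (s : Finset ι) (P : ι → KFormula n m k → Prop) :
    probOf n m k (fun Φ => ∃ a ∈ s, P a Φ) ≤ ∑ a ∈ s, probOf n m k (P a) := by
  unfold probOf
  rw [← sum_div]
  gcongr
  calc (_ : ℝ) ≤ (s.biUnion fun a => univ.filter (P a)).card := by
        gcongr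
        intro Φ
        simp
    _ ≤ ∑ a ∈ s, ((univ.filter (P a)).card : ℝ) := by exact_mod_cast card_biUnion_le

theorem probOf_clauses_inside (hn : 0 < n) (T : Finset (Fin m)) (U : Finset (Fin n)) :
    probOf n m k (fun Φ => ∀ i ∈ T, clauseVars Φ i ⊆ U) = ((U.card : ℝ) / n) ^ (k * T.card) := by
  have hevent : (univ.filter fun Φ : KFormula n m k => ∀ i ∈ T, clauseVars Φ i ⊆ U) =
      Fintype.piFinset fun i => if i ∈ T then Fintype.piFinset fun _ => U ×ˢ univ else univ := by
    ext Φ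
    simp only [mem_filter, mem_univ, true_and, Fintype.mem_piFinset]
    refine forall_congr' fun i => ?_
    split_ifs with hi <;> simp [hi, clauseVars, image_subset_iff]
  have hn' : (n : ℝ) ≠ 0 := by exact_mod_cast hn.ne'
  -- `probOf` filters with `Classical.propDecidable`, `hevent` with the structural instance.
  rw [probOf, filter_congr_decidable, hevent, Fintype.card_piFinset, Fintype.card_pi,
    Nat.cast_prod, Nat.cast_prod, ← prod_div_distrib]
  calc ∏ i : Fin m, _ = ∏ i : Fin m, if i ∈ T then ((U.card : ℝ) / n) ^ k else 1 := by
        refine prod_congr rfl fun i _ => ?_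
        split_ifs
        · simp [div_pow, mul_pow, mul_div_mul_right]
        · simp [hn']
    _ = ((U.card : ℝ) / n) ^ (k * T.card) := by
        rw [prod_ite_mem, univ_inter, prod_const, pow_mul]

theorem probOf_exists_clauses_inside_le (hn : 0 < n) (s : Finset ℕ) (w : ℕ → ℕ) :
    probOf n m k (fun Φ => ∃ t ∈ s, ∃ T ∈ powersetCard t (univ : Finset (Fin m)),
        ∃ U ∈ powersetCard (w t) (univ : Finset (Fin n)), ∀ i ∈ T, clauseVars Φ i ⊆ U) ≤
      ∑ t ∈ s, (m.choose t : ℝ) * n.choose (w t) * ((w t : ℝ) / n) ^ (k * t) := by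
  refine (probOf_exists_le_sum _ _).trans
    (sum_le_sum fun t _ => (probOf_exists_le_sum _ _).trans ?_)
  calc _ ≤ ∑ T ∈ powersetCard t (univ : Finset (Fin m)), ∑ U ∈ powersetCard (w t) univ,
          probOf n m k (fun Φ => ∀ i ∈ T, clauseVars Φ i ⊆ U) :=
        sum_le_sum fun T _ => probOf_exists_le_sum _ _
    _ = ∑ T ∈ powersetCard t (univ : Finset (Fin m)),
          ∑ U ∈ powersetCard (w t) (univ : Finset (Fin n)), ((w t : ℝ) / n) ^ (k * t) := by
        refine sum_congr rfl fun T hT => sum_congr rfl fun U hU => ?_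
        rw [probOf_clauses_inside hn, (mem_powersetCard.1 hT).2, (mem_powersetCard.1 hU).2]
    _ = _ := by simp [sum_const, card_powersetCard, mul_assoc]

def FewClausesInsideSmallSets (Φ : KFormula n m k) : Prop :=
  ∀ U : Finset (Fin n), (U.card : ℝ) ≤ n / k →
    ((univ.filter fun i : Fin m => clauseVars Φ i ⊆ U).card : ℝ) ≤ 1.1 * U.card / k

theorem exists_clauses_inside_of_not_fewClausesInsideSmallSets (hk : 0 < k)
    {Φ : KFormula n m k} (h : ¬ FewClausesInsideSmallSets Φ) :
    ∃ t ∈ Icc 1 m, ∃ T ∈ powersetCard t (univ : Finset (Fin m)),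
      ∃ U ∈ powersetCard (witnessSize n k t) (univ : Finset (Fin n)),
        ∀ i ∈ T, clauseVars Φ i ⊆ U := by
  simp only [FewClausesInsideSmallSets, not_forall, not_le, exists_prop] at h
  obtain ⟨U, hUn, hUT⟩ := h
  set T := univ.filter fun i => clauseVars Φ i ⊆ U
  have hk' : (0 : ℝ) < k := by exact_mod_cast hk
  have hUk : U.card * k ≤ n := by
    rw [le_div_iff₀ hk'] at hUn; exact_mod_cast hUn
  have hUt : 11 * U.card < 10 * (k * T.card) := by
    rw [div_lt_iff₀ hk'] at hUT
    have : (11 : ℝ) * U.card < 10 * (k * T.card) := by linarith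
    exact_mod_cast this
  have hT : 1 ≤ T.card := Nat.one_le_iff_ne_zero.2 fun h0 => by simp [h0] at hUt
  have hUw : U.card ≤ witnessSize n k T.card :=
    le_min ((Nat.le_div_iff_mul_le hk).2 hUk)
      ((Nat.le_div_iff_mul_le (by norm_num)).2 (by linarith))
  obtain ⟨U', hUU', hU'⟩ := exists_superset_card_eq hUw
    (by rw [Fintype.card_fin]; exact (min_le_left _ _).trans (Nat.div_le_self n k))
  exact ⟨T.card, mem_Icc.2 ⟨hT, card_le_univ T |>.trans_eq (Fintype.card_fin m)⟩, T,
    mem_powersetCard.2 ⟨subset_univ T, rfl⟩, U', mem_powersetCard.2 ⟨subset_univ U', hU'⟩,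
    fun i hi => (mem_filter.1 hi).2.trans hUU'⟩

theorem one_sub_le_probOf_fewClausesInsideSmallSets (hk : 6 ^ 12 ≤ k) (hn : 0 < n)
    (hm : (m : ℝ) ≤ 2 ^ k * n) :
    1 - 2 * k ^ 2 / n ≤ probOf n m k FewClausesInsideSmallSets := by
  have hbad : probOf n m k (fun Φ => ¬ FewClausesInsideSmallSets Φ) ≤ 2 * k ^ 2 / n :=
    calc _ ≤ _ := probOf_mono fun Φ =>
          exists_clauses_inside_of_not_fewClausesInsideSmallSets (by omega)
      _ ≤ _ := probOf_exists_clauses_inside_le hn (Icc 1 m) (witnessSize n k)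
      _ ≤ ∑ t ∈ Icc 1 m, (1 / 2 : ℝ) ^ t * (k ^ 2 / n) := sum_le_sum fun t ht =>
          choose_mul_choose_mul_pow_le hk hn (mem_Icc.1 ht).1 (witnessSize_mul_le n k t)
            (eleven_mul_witnessSize_le n k t) hm
      _ ≤ ∑ t ∈ range (m + 1), (1 / 2 : ℝ) ^ t * (k ^ 2 / n) :=
          sum_le_sum_of_subset_of_nonneg (fun t ht => by simp at ht ⊢; omega)
            fun _ _ _ => by positivity
      _ ≤ 2 * k ^ 2 / n := by
          rw [← sum_mul, mul_div_assoc]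
          gcongr
          exact sum_geometric_two_le _
  linarith [probOf_add_probOf_not hn (FewClausesInsideSmallSets (n := n) (m := m) (k := k))]

end

/-- **Property (2.2).** There is `k₀ > 0` such that for all `k ≥ k₀` and `m = m(n)` with
`m/n ≤ 2^k ln 2`, whp: for every set `U` of at most `n/k` variables, the number of clauses
whose variables are all contained in `U` is at most `1.1 |U| / k`. -/
theorem whp_few_clauses_inside_small_sets :
    ∃ k0 : ℕ, 0 < k0 ∧ ∀ k : ℕ, k0 ≤ k →
      ∀ m : ℕ → ℕ, (∀ n : ℕ, (m n : ℝ) / n ≤ 2 ^ k * Real.log 2) →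
        Filter.Tendsto
          (fun n : ℕ =>
            probOf n (m n) k (fun Φ =>
              ∀ U : Finset (Fin n), (U.card : ℝ) ≤ n / k →
                ((Finset.univ.filter fun i : Fin (m n) => clauseVars Φ i ⊆ U).card : ℝ)
                  ≤ 1.1 * U.card / k))
          Filter.atTop (nhds 1) := by
  refine ⟨6 ^ 12, by norm_num, fun k hk m hm => ?_⟩
  have hlower : Filter.Tendsto (fun n : ℕ => 1 - 2 * (k : ℝ) ^ 2 / n) Filter.atTop (nhds 1) := by
    simpa using (tendsto_const_nhds (x := (1 : ℝ))).sub
      (tendsto_const_div_atTop_nhds_zero_nat (2 * (k : ℝ) ^ 2))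
  refine tendsto_of_tendsto_of_tendsto_of_le_of_le' hlower tendsto_const_nhds ?_
    (Filter.Eventually.of_forall fun n => probOf_le_one _)
  filter_upwards [Filter.eventually_gt_atTop 0] with n hn
  refine one_sub_le_probOf_fewClausesInsideSmallSets hk hn ?_
  have hn' : (0 : ℝ) < n := by exact_mod_cast hn
  calc (m n : ℝ) ≤ 2 ^ k * Real.log 2 * n := (div_le_iff₀ hn').1 (hm n)
    _ ≤ 2 ^ k * n := by
        gcongr
        exact mul_le_of_le_one_right (by positivity) (Real.log_two_lt_d9.le.trans (by norm_num))
end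

section
/- Let k ≥ 3 and let Φ be any k-SAT formula over V = {x_1,…,x_n} with m clauses that satisfies: for every set U ⊆ V with |U| ≤ n/k, the number of clause indices i ∈ [m] with N(Φ_i) ⊆ U is at most 1.1·|U|/k. Then for every set Z ⊆ [m] with |Z| ≤ n/k², there exists a ⌊0.9k⌋-fold matching from the clauses {Φ_i : i ∈ Z} to the variable set N(Φ_Z). -/
open Finset
open scoped Classical

/-- The set `N(Φ_Z)` of variables occurring in the subformula with clause indices `Z`. -/
def varsOf {n m k : ℕ} (Φ : KFormula n m k) (Z : Finset (Fin m)) : Finset (Fin n) :=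
  Z.biUnion (clauseVars Φ)

/-- An `l`-fold matching from the set of clauses `A` to the set of variables `B` in the
factor graph of `Φ`: a set `M` of clause–variable edges of the factor graph joining `A`
to `B` such that every clause in `A` is incident with exactly `l` edges of `M` and every
variable in `B` is incident with at most one edge of `M`. -/
def IsFoldMatching {n m k : ℕ} (Φ : KFormula n m k) (A : Finset (Fin m))
    (B : Finset (Fin n)) (l : ℕ) (M : Finset (Fin m × Fin n)) : Prop :=
  (∀ e ∈ M, e.1 ∈ A ∧ e.2 ∈ B ∧ e.2 ∈ clauseVars Φ e.1) ∧
  (∀ i ∈ A, (M.filter fun e => e.1 = i).card = l) ∧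
  (∀ x ∈ B, (M.filter fun e => e.2 = x).card ≤ 1)
/-! Expansion gives Hall's condition with multiplicity `l = ⌊0.9k⌋`. A set `S` of at most
`n/k²` clauses spans at most `k|S| ≤ n/k` variables, so `U = N(Φ_S)` is admissible in the
expansion hypothesis; since every clause of `S` lies inside `U`, this gives
`|S| ≤ 1.1 |N(Φ_S)| / k`, whence `l |S| ≤ 0.99 |N(Φ_S)|`. Hall's theorem for `l` copies of
each clause of `Z` then yields the `l`-fold matching. -/

namespace Finset

variable {ι α : Type*} [DecidableEq α]

theorem exists_injective_fold_of_mul_card_le_card_biUnion (A : Finset ι) (t : ι → Finset α)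
    (l : ℕ) (h : ∀ S ⊆ A, l * #S ≤ #(S.biUnion t)) :
    ∃ f : A × Fin l → α, Function.Injective f ∧ ∀ p, f p ∈ t p.1 := by
  refine (all_card_le_biUnion_card_iff_exists_injective fun p : A × Fin l => t p.1).mp
    fun s => ?_
  set S := s.image fun p => (p.1 : ι)
  have hfiber : ∀ i ∈ S, #{p ∈ s | (p.1 : ι) = i} ≤ l := fun i _ =>
    calc #{p ∈ s | (p.1 : ι) = i} ≤ #(univ : Finset (Fin l)) :=
          card_le_card_of_injOn Prod.snd (fun _ _ => mem_univ _) fun p hp q hq hpq => by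
            simp only [mem_coe, mem_filter] at hp hq
            exact Prod.ext (Subtype.ext (hp.2.trans hq.2.symm)) hpq
      _ = l := card_fin l
  calc #s ≤ l * #S := card_le_mul_card_image s l hfiber
    _ ≤ #(S.biUnion t) := h S fun i hi => by
          obtain ⟨p, -, rfl⟩ := mem_image.mp hi
          exact p.1.2
    _ = #(s.biUnion fun p => t p.1) := by rw [image_biUnion]

end Finset

section Matching

variable {n m k : ℕ} (Φ : KFormula n m k)

theorem card_varsOf_le (S : Finset (Fin m)) : #(varsOf Φ S) ≤ k * #S :=
  calc #(varsOf Φ S) ≤ ∑ i ∈ S, #(clauseVars Φ i) := card_biUnion_le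
    _ ≤ ∑ _i ∈ S, k := sum_le_sum fun _ _ => card_image_le.trans (card_fin k).le
    _ = k * #S := by rw [sum_const, smul_eq_mul, mul_comm]

theorem subset_filter_clauseVars_subset_varsOf (S : Finset (Fin m)) :
    S ⊆ univ.filter fun i => clauseVars Φ i ⊆ varsOf Φ S := fun i hi =>
  mem_filter.mpr ⟨mem_univ i, subset_biUnion_of_mem (clauseVars Φ) hi⟩

theorem isFoldMatching_image_of_injective {Z : Finset (Fin m)} {l : ℕ} (f : Z × Fin l → Fin n)
    (hf : Function.Injective f) (hft : ∀ p, f p ∈ clauseVars Φ p.1) :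
    IsFoldMatching Φ Z (varsOf Φ Z) l (univ.image fun p => ((p.1 : Fin m), f p)) := by
  have hinj : Function.Injective fun p : Z × Fin l => ((p.1 : Fin m), f p) :=
    fun p q h => hf (congrArg Prod.snd h)
  refine ⟨?_, fun i hi => ?_, fun x _ => ?_⟩
  · simp only [mem_image, mem_univ, true_and, forall_exists_index]
    rintro _ p rfl
    exact ⟨p.1.2, subset_biUnion_of_mem (clauseVars Φ) p.1.2 (hft p), hft p⟩
  · rw [filter_image, card_image_of_injective _ hinj]
    have hfiber : (univ.filter fun p : Z × Fin l => (p.1 : Fin m) = i) = {⟨i, hi⟩} ×ˢ univ := by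
      ext ⟨⟨j, hj⟩, r⟩
      simp [eq_comm]
    rw [hfiber, card_product, card_singleton, card_univ, Fintype.card_fin, one_mul]
  · rw [card_le_one]
    simp only [mem_filter, mem_image, mem_univ, true_and, and_imp, forall_exists_index]
    rintro _ p rfl hp _ q rfl hq
    rw [hf (hp.trans hq.symm)]

theorem floor_mul_card_le_card_varsOf
    (hU : ∀ U : Finset (Fin n), (#U : ℝ) ≤ n / k →
      (#(univ.filter fun i => clauseVars Φ i ⊆ U) : ℝ) ≤ 1.1 * #U / k)
    {S : Finset (Fin m)} (hS : (#S : ℝ) ≤ n / k ^ 2) :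
    ⌊(0.9 : ℝ) * k⌋₊ * #S ≤ #(varsOf Φ S) := by
  rcases Nat.eq_zero_or_pos k with rfl | hk
  · simp
  have hk' : (0 : ℝ) < k := by exact_mod_cast hk
  have hsmall : (#(varsOf Φ S) : ℝ) ≤ n / k :=
    calc (#(varsOf Φ S) : ℝ) ≤ k * #S := by exact_mod_cast card_varsOf_le Φ S
      _ ≤ k * (n / k ^ 2) := by gcongr
      _ = n / k := by field_simp
  have hexpand : (#S : ℝ) * k ≤ 1.1 * #(varsOf Φ S) := by
    rw [← le_div_iff₀ hk']
    exact (Nat.cast_le.mpr (card_le_card (subset_filter_clauseVars_subset_varsOf Φ S))).trans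
      (hU _ hsmall)
  have hfloor : (⌊(0.9 : ℝ) * k⌋₊ : ℝ) ≤ 0.9 * k := Nat.floor_le (by positivity)
  have : (⌊(0.9 : ℝ) * k⌋₊ * #S : ℝ) ≤ #(varsOf Φ S) := by nlinarith
  exact_mod_cast this

end Matching

theorem matching_of_expansion_general {n m k : ℕ} (Φ : KFormula n m k)
    (hU : ∀ U : Finset (Fin n), (U.card : ℝ) ≤ n / k →
      ((Finset.univ.filter fun i : Fin m => clauseVars Φ i ⊆ U).card : ℝ)
        ≤ 1.1 * U.card / k) :
    ∀ Z : Finset (Fin m), (Z.card : ℝ) ≤ n / k ^ 2 →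
      ∃ M : Finset (Fin m × Fin n),
        IsFoldMatching Φ Z (varsOf Φ Z) ⌊(0.9 : ℝ) * k⌋₊ M := by
  intro Z hZ
  obtain ⟨f, hf, hft⟩ := exists_injective_fold_of_mul_card_le_card_biUnion Z (clauseVars Φ)
    ⌊(0.9 : ℝ) * k⌋₊ fun S hS =>
      floor_mul_card_le_card_varsOf Φ hU ((Nat.cast_le.mpr (card_le_card hS)).trans hZ)
  exact ⟨_, isFoldMatching_image_of_injective Φ f hf hft⟩

/-- **Deterministic part of Lemma 2.3.** If a `k`-SAT formula `Φ` satisfies property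
(2.3) (every set `U` of at most `n/k` variables fully contains at most `1.1|U|/k`
clauses), then for every `Z ⊆ [m]` with `|Z| ≤ n/k²` there is a `⌊0.9 k⌋`-fold matching
from the clauses of `Z` to `N(Φ_Z)`. -/
theorem matching_of_expansion {n m k : ℕ} (hk : 3 ≤ k) (Φ : KFormula n m k)
    (hU : ∀ U : Finset (Fin n), (U.card : ℝ) ≤ n / k →
      ((Finset.univ.filter fun i : Fin m => clauseVars Φ i ⊆ U).card : ℝ)
        ≤ 1.1 * U.card / k) :
    ∀ Z : Finset (Fin m), (Z.card : ℝ) ≤ n / k ^ 2 →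
      ∃ M : Finset (Fin m × Fin n),
        IsFoldMatching Φ Z (varsOf Φ Z) ⌊(0.9 : ℝ) * k⌋₊ M :=
  matching_of_expansion_general Φ hU
end
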